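/- arXiv:1108.1364 — 3 statements merged into one kernel-verified Lean document; each statement's English description precedes it below -/
import Mathlib

section
/- Let N ≥ 2 and let Φ, Ψ be automorphisms of the free group F_N. Suppose Ψ has property P and that Φ^l = ad_h ∘ Ψ for some integer l ≥ 1 and some h ∈ F_N (i.e., Φ^l and Ψ represent the same outer automorphism). Then Φ has property P. -/
open List

namespace SRF

variable {G : Type} [Group G]

/-- The element of `G` represented by a word whose letters are pairs
`(g, b)`, meaning `g` if `b = true` and `g⁻¹` if `b = false`. -/
def evalWord (L : List (G × Bool)) : G :=
  (L.map fun p => if p.2 then p.1 else p.1⁻¹).prod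

/-- All letters of the word lie in the set `A`. -/
def LettersIn (A : Set G) (L : List (G × Bool)) : Prop :=
  ∀ p ∈ L, p.1 ∈ A

/-- A word is (freely) reduced: no adjacent cancelling pair. -/
def IsRedWord (L : List (G × Bool)) : Prop :=
  L.Chain' fun p q => ¬(p.1 = q.1 ∧ p.2 = !q.2)

/-- A word is cyclically reduced: its double is reduced. -/
def IsCycRedWord (L : List (G × Bool)) : Prop :=
  IsRedWord (L ++ L)

/-- `A ⊆ G` is a free basis of `G`: the canonical homomorphism from the
free group on `A` to `G` is bijective (i.e. `A` freely generates `G`). -/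
def IsFreeBasis (A : Set G) : Prop :=
  Function.Bijective (FreeGroup.lift (fun a : A => (a : G)) : FreeGroup A →* G)

/-- `L` is the reduced word of `w` over `A`. -/
def IsRedWordOf (A : Set G) (L : List (G × Bool)) (w : G) : Prop :=
  LettersIn A L ∧ IsRedWord L ∧ evalWord L = w

/-- The word `u` occurs as a subword of the cyclically reduced form of `w`
over `A`: `u` is an infix of some cyclic permutation of a cyclically
reduced word over `A` representing the conjugacy class of `w`. -/
def OccursCyc (A : Set G) (u : List (G × Bool)) (w : G) : Prop :=
  ∃ (L : List (G × Bool)) (n : ℕ),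
    LettersIn A L ∧ IsCycRedWord L ∧ IsConj (evalWord L) w ∧ u <:+: L.rotate n

/-- The word `a^k` (|k| copies of the letter `a` with sign the sign of `k`). -/
def powWord (a : G) (k : ℤ) : List (G × Bool) :=
  List.replicate k.natAbs (a, decide (0 ≤ k))

/-- Property `P(A,a)`: for every `g` there is `M ≥ 1` bounding the exponents `k`
such that `a^k` occurs in the cyclically reduced form of `Φ^n g`, `n ∈ ℤ`. -/
def HasPAt (Φ : MulAut G) (A : Set G) (a : G) : Prop :=
  ∀ g : G, ∃ M : ℤ, 1 ≤ M ∧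
    ∀ (n k : ℤ), OccursCyc A (powWord a k) ((Φ ^ n) g) → |k| ≤ M

/-- Property `P⁺(A,a)`: as `P(A,a)` but with `n` ranging over `ℕ`. -/
def HasPplusAt (Φ : MulAut G) (A : Set G) (a : G) : Prop :=
  ∀ g : G, ∃ M : ℤ, 1 ≤ M ∧
    ∀ (n : ℕ) (k : ℤ), OccursCyc A (powWord a k) ((Φ ^ n) g) → |k| ≤ M

/-- Property `P⁻(A,a)`: as `P(A,a)` but with `n` ranging over non-positive integers. -/
def HasPminusAt (Φ : MulAut G) (A : Set G) (a : G) : Prop :=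
  ∀ g : G, ∃ M : ℤ, 1 ≤ M ∧
    ∀ n : ℤ, n ≤ 0 → ∀ k : ℤ, OccursCyc A (powWord a k) ((Φ ^ n) g) → |k| ≤ M

/-- Property `P`: property `P(A,a)` for some free basis `A` and some `a ∈ A`. -/
def HasP (Φ : MulAut G) : Prop :=
  ∃ (A : Set G) (a : G), IsFreeBasis A ∧ a ∈ A ∧ HasPAt Φ A a

/-- Property `P⁺`. -/
def HasPplus (Φ : MulAut G) : Prop :=
  ∃ (A : Set G) (a : G), IsFreeBasis A ∧ a ∈ A ∧ HasPplusAt Φ A a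

/-- Property `P⁻`. -/
def HasPminus (Φ : MulAut G) : Prop :=
  ∃ (A : Set G) (a : G), IsFreeBasis A ∧ a ∈ A ∧ HasPminusAt Φ A a

/-- Property `W` of a subset. -/
def HasW (S : Set G) : Prop :=
  ∃ (A : Set G) (a : G), IsFreeBasis A ∧ a ∈ A ∧ ∃ M : ℤ, 1 ≤ M ∧
    ∀ σ ∈ S, ∀ k : ℤ, OccursCyc A (powWord a k) σ → |k| ≤ M

lemma mul_conj_eq (Ψ : MulAut G) (h : G) :
    Ψ * MulAut.conj h = MulAut.conj (Ψ h) * Ψ := by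
  ext x
  simp [MulAut.conj_apply, mul_assoc]

lemma exists_conj_pow (h : G) (Ψ : MulAut G) (m : ℕ) :
    ∃ c : G, (MulAut.conj h * Ψ) ^ m = MulAut.conj c * Ψ ^ m := by
  induction m with
  | zero => exact ⟨1, by simp⟩
  | succ m ih =>
    obtain ⟨c, hc⟩ := ih
    refine ⟨c * (Ψ ^ m) h, ?_⟩
    rw [pow_succ, hc, mul_assoc, ← mul_assoc (Ψ ^ m), mul_conj_eq, map_mul,
      pow_succ]
    simp [mul_assoc]

lemma exists_conj_zpow (h : G) (Ψ : MulAut G) (q : ℤ) :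
    ∃ c : G, (MulAut.conj h * Ψ) ^ q = MulAut.conj c * Ψ ^ q := by
  rcases le_or_gt 0 q with hq | hq
  · obtain ⟨c, hc⟩ := exists_conj_pow h Ψ q.toNat
    refine ⟨c, ?_⟩
    rw [← Int.toNat_of_nonneg hq, zpow_natCast, zpow_natCast, hc]
  · obtain ⟨c, hc⟩ := exists_conj_pow h Ψ (-q).toNat
    refine ⟨(Ψ ^ q) c⁻¹, ?_⟩
    have hm : q = -((-q).toNat : ℤ) := by omega
    rw [hm, zpow_neg, zpow_natCast, hc, mul_inv_rev, ← map_inv MulAut.conj c,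
      ← zpow_natCast Ψ, ← zpow_neg, mul_conj_eq]

lemma occursCyc_of_isConj {A : Set G} {u : List (G × Bool)} {w w' : G}
    (hc : IsConj w w') (h : OccursCyc A u w) : OccursCyc A u w' := by
  obtain ⟨L, n, h1, h2, h3, h4⟩ := h
  exact ⟨L, n, h1, h2, h3.trans hc, h4⟩

/-- If `Ψ ∈ Aut(F_N)` has property `P` and `Φ^l = ad_h ∘ Ψ`
for some `l ≥ 1` and some `h ∈ F_N` (i.e. `Φ^l` and `Ψ` represent the same
outer automorphism), then `Φ` has property `P`. -/
theorem stmt_4 (N : ℕ) (hN : 2 ≤ N) (Φ Ψ : MulAut (FreeGroup (Fin N)))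
    (hΨ : HasP Ψ) (l : ℕ) (hl : 1 ≤ l) (h : FreeGroup (Fin N))
    (heq : Φ ^ l = MulAut.conj h * Ψ) :
    HasP Φ := by
  obtain ⟨A, a, hA, ha, hP⟩ := hΨ
  refine ⟨A, a, hA, ha, ?_⟩
  intro g
  choose M hM1 hMb using fun r : ℕ => hP ((Φ ^ r) g)
  have hlpos : (0 : ℤ) < l := by exact_mod_cast hl
  refine ⟨1 + ∑ r ∈ Finset.range l, |M r|, ?_, ?_⟩
  · have : (0 : ℤ) ≤ ∑ r ∈ Finset.range l, |M r| :=
      Finset.sum_nonneg fun r _ => abs_nonneg _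
    omega
  intro n k hocc
  set q := n / (l : ℤ) with hq
  set r := n % (l : ℤ) with hr
  have hr0 : 0 ≤ r := Int.emod_nonneg n (by omega)
  have hrl : r < l := Int.emod_lt_of_pos n hlpos
  have hn : n = (l : ℤ) * q + r := (Int.mul_ediv_add_emod n l).symm
  have hsplit : (Φ ^ n) g = ((Φ ^ l) ^ q) ((Φ ^ r.toNat) g) := by
    have : Φ ^ n = (Φ ^ l) ^ q * Φ ^ r.toNat := by
      rw [← zpow_natCast Φ l, ← zpow_mul, ← zpow_natCast Φ r.toNat,
        Int.toNat_of_nonneg hr0, ← zpow_add, ← hn]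
    rw [this]; rfl
  obtain ⟨c, hc⟩ := exists_conj_zpow h Ψ q
  rw [heq] at hsplit
  rw [hc] at hsplit
  have hconj : IsConj ((Φ ^ n) g) ((Ψ ^ q) ((Φ ^ r.toNat) g)) := by
    rw [hsplit]
    simp only [MulAut.mul_apply, MulAut.conj_apply]
    exact isConj_iff.2 ⟨c⁻¹, by group⟩
  have hkey := hMb r.toNat q k (occursCyc_of_isConj hconj hocc)
  have hmem : r.toNat ∈ Finset.range l := Finset.mem_range.2 (by omega)
  have hle : |M r.toNat| ≤ ∑ i ∈ Finset.range l, |M i| :=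
    Finset.single_le_sum (fun i _ => abs_nonneg (M i)) hmem
  have := le_abs_self (M r.toNat)
  omega

end SRF
end

section
/- Let N ≥ 2, let A be a free basis of the free group F_N, and let Φ be an automorphism of F_N. Then there exists a constant C ≥ 0 such that for all α, β ∈ F_N with |αβ|_A = |α|_A + |β|_A (i.e., the concatenation of the reduced words of α and β over A is reduced), one has |Φ(α)|_A + |Φ(β)|_A − |Φ(αβ)|_A ≤ 2C, the reduced word of Φ(αβ) over A being obtained by cancelling at most C terminal letters of the reduced word of Φ(α) against at most C initial letters of the reduced word of Φ(β). -/
open List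

namespace SRF

variable {G : Type} [Group G]

/-- The formal inverse of a word. -/
def invWord (L : List (G × Bool)) : List (G × Bool) :=
  (L.map fun p => (p.1, !p.2)).reverse

end SRF

/-!
Transporting along `FreeGroup A ≃* F_N`, `Φ` becomes an automorphism `ψ` of the free group on
the finite set `A`; `ψ` and `ψ⁻¹` are Lipschitz for the word metric, with constants `M`, `M'`.
If `ab` is reduced, the prefixes of its reduced word, translated by `a⁻¹`, form a geodesic
through `1` from `a⁻¹` to `b`, so their images `q i` under `ψ` form a quasi-geodesic through `1`
from `ψ(a)⁻¹` to `ψ(b)`. The cancellation between `ψ a` and `ψ b` is the length `c` of the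
common prefix of `ψ(a)⁻¹` and `ψ(b)`, their Gromov product in the Cayley tree. Before and after
it reaches `1` the quasi-geodesic has to pass within `M` of the branch point at distance `c`
from `1`; these two passages are less than `2M` apart, hence at most `2MM'` steps apart, whereas
getting from the first one to `1` takes at least `c / M` steps. Hence `c ≤ 2M²M'`.
-/

namespace FreeGroup

variable {X : Type*} [DecidableEq X]

-- In the Cayley tree of `FreeGroup X` this is the Gromov product `(x · y)₁`.
def gromovProduct (x y : FreeGroup X) : ℕ :=
  Nat.findGreatest (fun c => x.toWord.take c = y.toWord.take c) (min x.norm y.norm)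

theorem gromovProduct_le_norm_left (x y : FreeGroup X) : gromovProduct x y ≤ x.norm :=
  (Nat.findGreatest_le _).trans (min_le_left _ _)

theorem gromovProduct_le_norm_right (x y : FreeGroup X) : gromovProduct x y ≤ y.norm :=
  (Nat.findGreatest_le _).trans (min_le_right _ _)

theorem take_gromovProduct (x y : FreeGroup X) :
    x.toWord.take (gromovProduct x y) = y.toWord.take (gromovProduct x y) :=
  Nat.findGreatest_spec (P := fun c => x.toWord.take c = y.toWord.take c) (Nat.zero_le _) rfl

theorem le_gromovProduct_iff {x y : FreeGroup X} {c : ℕ} :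
    c ≤ gromovProduct x y ↔
      c ≤ x.norm ∧ c ≤ y.norm ∧ x.toWord.take c = y.toWord.take c := by
  refine ⟨fun h => ⟨h.trans (gromovProduct_le_norm_left x y),
    h.trans (gromovProduct_le_norm_right x y), ?_⟩, fun ⟨hx, hy, h⟩ =>
      Nat.le_findGreatest (le_min hx hy) h⟩
  simpa [take_take, min_eq_left h] using congrArg (take c) (take_gromovProduct x y)

theorem gromovProduct_comm (x y : FreeGroup X) : gromovProduct x y = gromovProduct y x := by
  simp only [gromovProduct, min_comm x.norm, eq_comm]

theorem gromovProduct_self (x : FreeGroup X) : gromovProduct x x = x.norm := by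
  rw [gromovProduct, Nat.findGreatest_eq (P := fun c => _ = _) rfl, min_self]

@[simp] theorem gromovProduct_one_right (x : FreeGroup X) : gromovProduct x 1 = 0 :=
  Nat.le_zero.1 ((gromovProduct_le_norm_right x 1).trans_eq norm_one)

theorem min_gromovProduct_le (x y z : FreeGroup X) :
    min (gromovProduct x y) (gromovProduct y z) ≤ gromovProduct x z := by
  obtain ⟨hx, -, hxy⟩ :=
    le_gromovProduct_iff.1 (min_le_left (gromovProduct x y) (gromovProduct y z))
  obtain ⟨-, hz, hyz⟩ :=
    le_gromovProduct_iff.1 (min_le_right (gromovProduct x y) (gromovProduct y z))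
  exact le_gromovProduct_iff.2 ⟨hx, hz, hxy.trans hyz⟩

theorem getElem_gromovProduct_ne (x y : FreeGroup X) (hx : gromovProduct x y < x.toWord.length)
    (hy : gromovProduct x y < y.toWord.length) :
    x.toWord[gromovProduct x y] ≠ y.toWord[gromovProduct x y] := by
  intro h
  have : ¬ gromovProduct x y + 1 ≤ gromovProduct x y := by omega
  refine this (le_gromovProduct_iff.2 ⟨hx, hy, ?_⟩)
  rw [take_succ_eq_append_getElem hx, take_succ_eq_append_getElem hy, take_gromovProduct, h]

theorem toWord_inv_mul (x y : FreeGroup X) :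
    (x⁻¹ * y).toWord =
      invRev (x.toWord.drop (gromovProduct x y)) ++ y.toWord.drop (gromovProduct x y) := by
  set g := gromovProduct x y
  have hx : x = mk (x.toWord.take g) * mk (x.toWord.drop g) := by
    rw [mul_mk, take_append_drop, mk_toWord]
  have hy : y = mk (x.toWord.take g) * mk (y.toWord.drop g) := by
    rw [take_gromovProduct, mul_mk, take_append_drop, mk_toWord]
  have hxy : x⁻¹ * y = mk (invRev (x.toWord.drop g) ++ y.toWord.drop g) := by
    rw [← mul_mk, ← inv_mk]
    conv_lhs => rw [hx, hy]
    group
  rw [hxy, toWord_mk, IsReduced.reduce_eq]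
  refine isChain_append.2 ⟨?_, isReduced_toWord.infix (drop_suffix g _).isInfix, ?_⟩
  · have hpre : invRev (x.toWord.drop g) <+: x⁻¹.toWord :=
      ⟨invRev (x.toWord.take g), by rw [toWord_inv, ← invRev_append, take_append_drop]⟩
    exact isReduced_toWord.infix hpre.isInfix
  · intro p hp q hq hpq
    simp only [invRev, getLast?_reverse, head?_map, head?_drop, Option.mem_def,
      Option.map_eq_some_iff] at hp hq
    obtain ⟨p', hp', rfl⟩ := hp
    obtain ⟨hxg, rfl⟩ := List.getElem?_eq_some_iff.1 hp'
    obtain ⟨hyg, rfl⟩ := List.getElem?_eq_some_iff.1 hq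
    by_contra h
    exact getElem_gromovProduct_ne x y hxg hyg (Prod.ext hpq (by simpa using h))

theorem norm_inv_mul_add_two_mul_gromovProduct (x y : FreeGroup X) :
    (x⁻¹ * y).norm + 2 * gromovProduct x y = x.norm + y.norm := by
  have hx := gromovProduct_le_norm_left x y
  have hy := gromovProduct_le_norm_right x y
  simp only [norm] at hx hy ⊢
  rw [toWord_inv_mul, length_append, invRev_length, length_drop, length_drop]
  omega

theorem norm_le_gromovProduct_add_norm_inv_mul (x y : FreeGroup X) :
    x.norm ≤ gromovProduct x y + (x⁻¹ * y).norm := by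
  have := norm_inv_mul_add_two_mul_gromovProduct x y
  have := gromovProduct_le_norm_right x y
  omega

theorem norm_inv_mul_comm (x y : FreeGroup X) : (x⁻¹ * y).norm = (y⁻¹ * x).norm := by
  rw [← norm_inv_eq, mul_inv_rev, inv_inv]

theorem exists_le_gromovProduct_norm_lt (q : ℕ → FreeGroup X) {n c M : ℕ} (hc : 0 < c)
    (hc₀ : c ≤ (q 0).norm) (hn : q n = 1)
    (hstep : ∀ i < n, ((q i)⁻¹ * q (i + 1)).norm ≤ M) :
    ∃ j < n, c ≤ gromovProduct (q 0) (q j) ∧ (q j).norm < c + M := by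
  set j := Nat.findGreatest (fun i => c ≤ gromovProduct (q 0) (q i)) n
  have hj : c ≤ gromovProduct (q 0) (q j) :=
    Nat.findGreatest_spec (P := fun i => c ≤ gromovProduct (q 0) (q i)) (Nat.zero_le n)
      (by rwa [gromovProduct_self])
  have hjn : j < n := by
    refine (Nat.findGreatest_le n).lt_of_ne fun (h : j = n) => ?_
    rw [h, hn, gromovProduct_one_right] at hj
    omega
  have hnext : ¬ c ≤ gromovProduct (q 0) (q (j + 1)) :=
    Nat.findGreatest_is_greatest (P := fun i => c ≤ gromovProduct (q 0) (q i))
      (Nat.lt_succ_self j) hjn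
  have hleave : gromovProduct (q j) (q (j + 1)) < c := by
    have := min_gromovProduct_le (q 0) (q j) (q (j + 1))
    omega
  have := norm_le_gromovProduct_add_norm_inv_mul (q j) (q (j + 1))
  exact ⟨j, hjn, hj, by have := hstep j hjn; omega⟩

theorem gromovProduct_le_of_quasiGeodesic (q : ℕ → FreeGroup X) {n k M M' : ℕ} (hnk : n ≤ k)
    (hn : q n = 1) (hup : ∀ i j, i ≤ j → j ≤ k → ((q i)⁻¹ * q j).norm ≤ M * (j - i))
    (hlo : ∀ i j, i ≤ j → j ≤ k → j - i ≤ M' * ((q i)⁻¹ * q j).norm) :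
    gromovProduct (q 0) (q k) ≤ 2 * M * M * M' := by
  set c := gromovProduct (q 0) (q k)
  rcases Nat.eq_zero_or_pos c with hc | hc
  · rw [hc]; exact Nat.zero_le _
  obtain ⟨j, hjn, hcj, hqj⟩ := exists_le_gromovProduct_norm_lt q hc
    (gromovProduct_le_norm_left _ _) hn
    (fun i hi => by simpa using hup i (i + 1) (by omega) (by omega))
  obtain ⟨i, hik, hci, hqi⟩ := exists_le_gromovProduct_norm_lt (fun i => q (k - i)) (n := k - n)
    hc (by simpa using gromovProduct_le_norm_right (q 0) (q k)) (by simpa [Nat.sub_sub_self hnk])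
    (fun i hi => by
      rw [norm_inv_mul_comm]
      simpa [show k - i - (k - (i + 1)) = 1 by omega]
        using hup (k - (i + 1)) (k - i) (by omega) (by omega))
  simp only [Nat.sub_zero] at hci hqi
  have hmid : c ≤ gromovProduct (q j) (q (k - i)) := by
    have := min_gromovProduct_le (q j) (q 0) (q (k - i))
    have := min_gromovProduct_le (q 0) (q k) (q (k - i))
    rw [gromovProduct_comm] at hcj
    omega
  have hclose : ((q j)⁻¹ * q (k - i)).norm < 2 * M := by
    have := norm_inv_mul_add_two_mul_gromovProduct (q j) (q (k - i))
    omega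
  calc c ≤ (q j).norm := hcj.trans (gromovProduct_le_norm_right _ _)
    _ = ((q j)⁻¹ * q n).norm := by rw [hn, mul_one, norm_inv_eq]
    _ ≤ M * (n - j) := hup j n hjn.le hnk
    _ ≤ M * (k - i - j) := Nat.mul_le_mul_left _ (by omega)
    _ ≤ M * (M' * ((q j)⁻¹ * q (k - i)).norm) :=
        Nat.mul_le_mul_left _ (hlo j (k - i) (by omega) (by omega))
    _ ≤ M * (M' * (2 * M)) := Nat.mul_le_mul_left _ (Nat.mul_le_mul_left _ hclose.le)
    _ = 2 * M * M * M' := by ring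

theorem exists_norm_map_le [Finite X] {Y : Type*} [DecidableEq Y]
    (f : FreeGroup X →* FreeGroup Y) : ∃ M, ∀ g, (f g).norm ≤ M * g.norm := by
  obtain ⟨M, hM⟩ := (Set.finite_range fun x => (f (of x)).norm).bddAbove
  have hletter : ∀ p : X × Bool, (f (mk [p])).norm ≤ M := by
    rintro ⟨x, _ | _⟩
    · change (f (of x)⁻¹).norm ≤ M
      rw [_root_.map_inv, norm_inv_eq]
      exact hM ⟨x, rfl⟩
    · exact hM ⟨x, rfl⟩
  have hword : ∀ L : List (X × Bool), (f (mk L)).norm ≤ M * L.length := by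
    intro L
    induction L with
    | nil => simp [← one_eq_mk]
    | cons p L ih =>
      calc (f (mk (p :: L))).norm = (f (mk [p]) * f (mk L)).norm := by
            rw [← _root_.map_mul, mul_mk]; rfl
        _ ≤ (f (mk [p])).norm + (f (mk L)).norm := norm_mul_le _ _
        _ ≤ M * (p :: L).length := by
            rw [length_cons, Nat.mul_succ]; have := hletter p; omega
  refine ⟨M, fun g => ?_⟩
  have := hword g.toWord
  rwa [mk_toWord] at this

theorem norm_inv_mul_mk_take {W : List (X × Bool)} (hW : IsReduced W) {i j : ℕ} (hij : i ≤ j)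
    (hj : j ≤ W.length) : ((mk (W.take i))⁻¹ * mk (W.take j)).norm = j - i := by
  have hsplit : W.take i ++ (W.take j).drop i = W.take j := by
    simpa [take_take, min_eq_left hij] using take_append_drop i (W.take j)
  have hred : IsReduced ((W.take j).drop i) :=
    hW.infix ((drop_suffix i _).isInfix.trans (take_prefix j W).isInfix)
  have hmk : (mk (W.take i))⁻¹ * mk (W.take j) = mk ((W.take j).drop i) := by
    rw [inv_mul_eq_iff_eq_mul, mul_mk, hsplit]
  rw [hmk, norm, toWord_mk, hred.reduce_eq, length_drop, length_take]
  omega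

theorem exists_gromovProduct_inv_map_le [Finite X] (ψ : FreeGroup X ≃* FreeGroup X) :
    ∃ C, ∀ a b : FreeGroup X, (a * b).toWord = a.toWord ++ b.toWord →
      gromovProduct (ψ a)⁻¹ (ψ b) ≤ C := by
  obtain ⟨M, hM⟩ := exists_norm_map_le ψ.toMonoidHom
  obtain ⟨M', hM'⟩ := exists_norm_map_le ψ.symm.toMonoidHom
  refine ⟨2 * M * M * M', fun a b hab => ?_⟩
  set W := (a * b).toWord
  set q : ℕ → FreeGroup X := fun i => ψ (a⁻¹ * mk (W.take i))
  have hq : ∀ i j, (q i)⁻¹ * q j = ψ ((mk (W.take i))⁻¹ * mk (W.take j)) := by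
    intro i j
    simp only [q, ← _root_.map_inv, ← _root_.map_mul]
    group
  have hq0 : q 0 = (ψ a)⁻¹ := by simp [q, ← one_eq_mk]
  have hqn : q a.norm = 1 := by simp [q, W, hab, norm, mk_toWord]
  have hqk : q W.length = ψ b := by simp [q, W, mk_toWord]
  have := gromovProduct_le_of_quasiGeodesic q (n := a.norm) (k := W.length)
    (by simp [W, hab, norm]) hqn
    (fun i j hij hj => by
      rw [hq, ← norm_inv_mul_mk_take isReduced_toWord hij hj]; exact hM _)
    (fun i j hij hj => by
      rw [← norm_inv_mul_mk_take isReduced_toWord hij hj, hq]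
      simpa using hM' (ψ ((mk (W.take i))⁻¹ * mk (W.take j))))
  rwa [hq0, hqk] at this

theorem exists_toWord_mul_eq_append (u v : FreeGroup X) :
    ∃ P Q R S : List (X × Bool), R.length = gromovProduct u⁻¹ v ∧ Q = invRev R ∧
      u.toWord = P ++ Q ∧ v.toWord = R ++ S ∧ (u * v).toWord = P ++ S := by
  set g := gromovProduct u⁻¹ v
  refine ⟨invRev (u⁻¹.toWord.drop g), invRev (v.toWord.take g), v.toWord.take g,
    v.toWord.drop g, ?_, rfl, ?_, (take_append_drop g _).symm, ?_⟩
  · exact (length_take ..).trans (min_eq_left (gromovProduct_le_norm_right _ _))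
  · rw [← invRev_append, ← take_gromovProduct, take_append_drop, toWord_inv, invRev_invRev]
  · simpa using toWord_inv_mul u⁻¹ v

theorem exists_bounded_cancellation [Finite X] (ψ : FreeGroup X ≃* FreeGroup X) :
    ∃ C, ∀ a b : FreeGroup X, (a * b).toWord = a.toWord ++ b.toWord →
      ∃ P Q R S : List (X × Bool), R.length ≤ C ∧ Q = invRev R ∧
        (ψ a).toWord = P ++ Q ∧ (ψ b).toWord = R ++ S ∧ (ψ (a * b)).toWord = P ++ S := by
  obtain ⟨C, hC⟩ := exists_gromovProduct_inv_map_le ψ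
  refine ⟨C, fun a b hab => ?_⟩
  obtain ⟨P, Q, R, S, hR, hQR, hu, hv, huv⟩ := exists_toWord_mul_eq_append (ψ a) (ψ b)
  exact ⟨P, Q, R, S, hR ▸ hC a b hab, hQR, hu, hv, by rwa [_root_.map_mul]⟩

end FreeGroup

namespace SRF

section Words

variable {G : Type} {A : Set G}

def coeWord (A : Set G) (L : List (A × Bool)) : List (G × Bool) := L.map (Prod.map (↑) id)

@[simp] theorem coeWord_append (L L' : List (A × Bool)) :
    coeWord A (L ++ L') = coeWord A L ++ coeWord A L' := map_append

@[simp] theorem length_coeWord (L : List (A × Bool)) : (coeWord A L).length = L.length :=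
  length_map _

theorem coeWord_injective : Function.Injective (coeWord A) :=
  map_injective_iff.2 (Subtype.val_injective.prodMap Function.injective_id)

theorem invWord_coeWord (L : List (A × Bool)) :
    invWord (coeWord A L) = coeWord A (FreeGroup.invRev L) := by
  simp [invWord, coeWord, FreeGroup.invRev, map_reverse]

theorem isRedWord_coeWord_iff (L : List (A × Bool)) :
    IsRedWord (coeWord A L) ↔ FreeGroup.IsReduced L := by
  refine (isChain_map _).trans ?_
  simp [FreeGroup.IsReduced, Subtype.val_inj]

end Words

variable {G : Type} [Group G] {A : Set G}

noncomputable def basisEquiv (hA : IsFreeBasis A) : FreeGroup A ≃* G := MulEquiv.ofBijective _ hA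

theorem evalWord_coeWord (L : List (A × Bool)) :
    evalWord (coeWord A L) = FreeGroup.lift (↑) (FreeGroup.mk L) := by
  rw [FreeGroup.lift_mk, evalWord, coeWord, map_map]
  congr 1
  refine map_congr_left fun ⟨x, b⟩ _ => ?_
  cases b <;> rfl

theorem isRedWordOf_basisEquiv_iff [DecidableEq A] (hA : IsFreeBasis A) {L : List (G × Bool)}
    {u : FreeGroup A} : IsRedWordOf A L (basisEquiv hA u) ↔ L = coeWord A u.toWord := by
  refine ⟨fun ⟨hletters, hred, heval⟩ => ?_, ?_⟩
  · obtain ⟨L', rfl⟩ : ∃ L' : List (A × Bool), coeWord A L' = L :=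
      ⟨L.pmap (fun p hp => (⟨p.1, hp⟩, p.2)) fun p hp => hletters p hp,
        by rw [coeWord, map_pmap]; exact pmap_eq_self.2 fun _ _ => rfl⟩
    have hu : FreeGroup.mk L' = u := hA.1 (by rw [← evalWord_coeWord, heval]; rfl)
    rw [← hu, FreeGroup.toWord_mk, ((isRedWord_coeWord_iff L').1 hred).reduce_eq]
  · rintro rfl
    refine ⟨fun p hp => ?_, (isRedWord_coeWord_iff _).2 FreeGroup.isReduced_toWord, ?_⟩
    · obtain ⟨x, -, rfl⟩ := mem_map.1 hp
      exact x.1.2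
    · rw [evalWord_coeWord, FreeGroup.mk_toWord]
      rfl

theorem stmt_17_general (N : ℕ)
    (A : Set (FreeGroup (Fin N))) (hA : IsFreeBasis A)
    (Φ : MulAut (FreeGroup (Fin N))) :
    ∃ C : ℕ, ∀ α β : FreeGroup (Fin N),
      (∃ Lα Lβ : List (FreeGroup (Fin N) × Bool),
        IsRedWordOf A Lα α ∧ IsRedWordOf A Lβ β ∧ IsRedWordOf A (Lα ++ Lβ) (α * β)) →
      ∃ P Q R S : List (FreeGroup (Fin N) × Bool),
        Q.length ≤ C ∧ R.length ≤ C ∧ Q = invWord R ∧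
        IsRedWordOf A (P ++ Q) (Φ α) ∧ IsRedWordOf A (R ++ S) (Φ β) ∧
        IsRedWordOf A (P ++ S) (Φ (α * β)) ∧
        (P ++ Q).length + (R ++ S).length - (P ++ S).length ≤ 2 * C := by
  classical
  set E := basisEquiv hA
  have : Finite A := .of_equiv _ (Equiv.ofFreeGroupEquiv E).symm
  set ψ := (E.trans Φ).trans E.symm
  have hΦ : ∀ w, Φ (E w) = E (ψ w) := fun w => by simp [ψ]
  obtain ⟨C, hC⟩ := FreeGroup.exists_bounded_cancellation ψ
  refine ⟨C, fun α β ⟨Lα, Lβ, hα, hβ, hαβ⟩ => ?_⟩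
  obtain ⟨a, rfl⟩ := E.surjective α
  obtain ⟨b, rfl⟩ := E.surjective β
  rw [← map_mul] at hαβ ⊢
  rw [isRedWordOf_basisEquiv_iff] at hα hβ hαβ
  obtain ⟨P, Q, R, S, hR, rfl, hu, hv, huv⟩ :=
    hC a b (coeWord_injective (by rw [coeWord_append, ← hα, ← hβ, ← hαβ]))
  refine ⟨coeWord A P, coeWord A (FreeGroup.invRev R), coeWord A R, coeWord A S,
    by simpa using hR, by simpa using hR, (invWord_coeWord R).symm, ?_, ?_, ?_, ?_⟩
  · rw [← coeWord_append, hΦ, isRedWordOf_basisEquiv_iff, hu]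
  · rw [← coeWord_append, hΦ, isRedWordOf_basisEquiv_iff, hv]
  · rw [← coeWord_append, hΦ, isRedWordOf_basisEquiv_iff, huv]
  · simp only [length_append, length_coeWord, FreeGroup.invRev_length]
    omega

/-- **bounded cancellation.** For a free basis `A` of `F_N`
(`N ≥ 2`) and `Φ ∈ Aut(F_N)` there is `C ≥ 0` such that whenever the reduced
words of `α` and `β` over `A` concatenate to a reduced word (i.e.
`|αβ|_A = |α|_A + |β|_A`), the reduced word of `Φ(αβ)` is obtained by cancelling
at most `C` terminal letters of the reduced word of `Φ(α)` against at most `C`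
initial letters of the reduced word of `Φ(β)`; in particular
`|Φ(α)|_A + |Φ(β)|_A − |Φ(αβ)|_A ≤ 2C`. -/
theorem stmt_17 (N : ℕ) (hN : 2 ≤ N)
    (A : Set (FreeGroup (Fin N))) (hA : IsFreeBasis A)
    (Φ : MulAut (FreeGroup (Fin N))) :
    ∃ C : ℕ, ∀ α β : FreeGroup (Fin N),
      (∃ Lα Lβ : List (FreeGroup (Fin N) × Bool),
        IsRedWordOf A Lα α ∧ IsRedWordOf A Lβ β ∧ IsRedWordOf A (Lα ++ Lβ) (α * β)) →
      ∃ P Q R S : List (FreeGroup (Fin N) × Bool),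
        Q.length ≤ C ∧ R.length ≤ C ∧ Q = invWord R ∧
        IsRedWordOf A (P ++ Q) (Φ α) ∧ IsRedWordOf A (R ++ S) (Φ β) ∧
        IsRedWordOf A (P ++ S) (Φ (α * β)) ∧
        (P ++ Q).length + (R ++ S).length - (P ++ S).length ≤ 2 * C :=
  stmt_17_general N A hA Φ

end SRF
end

section
/- Let N ≥ 2, let A be a free basis of the free group F_N, let a₀ ∈ A, and set A' = A ∖ {a₀}. Let Φ be an automorphism of F_N such that Φ maps the subgroup ⟨A'⟩ into itself and Φ(a₀) = a₀ u for some u ∈ ⟨A'⟩. Then for every g ∈ F_N and every integer n ≥ 0, the number of occurrences of the letters a₀ and a₀⁻¹ in the reduced word of Φ^n(g) over A is at most the number of occurrences of a₀ and a₀⁻¹ in the reduced word of g over A. -/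
/-!
Let `#w` be the number of letters `a₀^{±1}` in the reduced word of `w` over `A`. Since the
reduced word of `xy` is a subword of the concatenation of those of `x` and `y`, `#` is
subadditive; it is invariant under inversion and vanishes on `⟨A \ {a₀}⟩`. The hypotheses
pass to `Φ^n`: it preserves `⟨A \ {a₀}⟩` and maps `a₀` into `a₀⟨A \ {a₀}⟩`, so
`#Φ^n(b^{±1}) ≤ #b` for every `b ∈ A`. Subadditivity along the reduced word of `g` then
gives `#Φ^n(g) ≤ #g`.
-/

open List

namespace SRF

variable {G : Type} [Group G]

open Classical in
/-- The number of occurrences of the letters `a` and `a⁻¹` in a word. -/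
noncomputable def countLetter (a : G) (L : List (G × Bool)) : ℕ :=
  L.countP fun p => decide (p.1 = a)

variable {A : Set G}

lemma MulAut.pow_apply_mem {H : Subgroup G} {Φ : MulAut G} (hΦ : ∀ x ∈ H, Φ x ∈ H) (n : ℕ)
    {x : G} (hx : x ∈ H) : (Φ ^ n) x ∈ H := by
  induction n with
  | zero => exact hx
  | succ n ih => rw [pow_succ', MulAut.mul_apply]; exact hΦ _ ih

lemma MulAut.exists_pow_apply_eq_mul {H : Subgroup G} {Φ : MulAut G} (hΦ : ∀ x ∈ H, Φ x ∈ H)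
    {a u : G} (hu : u ∈ H) (ha : Φ a = a * u) (n : ℕ) : ∃ w ∈ H, (Φ ^ n) a = a * w := by
  induction n with
  | zero => exact ⟨1, H.one_mem, by simp⟩
  | succ n ih =>
    obtain ⟨w, hw, hΦw⟩ := ih
    refine ⟨u * Φ w, H.mul_mem hu (hΦ w hw), ?_⟩
    rw [pow_succ', MulAut.mul_apply, hΦw, map_mul, ha, mul_assoc]

lemma countLetter_append {β : Type} (a : β) (L₁ L₂ : List (β × Bool)) :
    countLetter a (L₁ ++ L₂) = countLetter a L₁ + countLetter a L₂ :=
  List.countP_append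

lemma isReduced_of_isRedWord_map {α : Type*} {β : Type} {f : α → β} {L : List (α × Bool)}
    (h : IsRedWord (L.map (Prod.map f id))) : FreeGroup.IsReduced L := by
  rw [IsRedWord, List.Chain', List.isChain_map] at h
  refine h.imp fun {p q} hpq hfst => ?_
  cases hp : p.2 <;> cases hq : q.2 <;> simp_all

lemma exists_map_val_eq_of_lettersIn {β : Type} {S : Set β} {L : List (β × Bool)}
    (h : LettersIn S L) : ∃ L' : List (S × Bool), L'.map (Prod.map Subtype.val id) = L := by
  refine ⟨L.pmap (fun (p : β × Bool) (hp : p.1 ∈ S) => ((⟨p.1, hp⟩ : S), p.2))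
    (fun p hp => h p hp), ?_⟩
  rw [List.map_pmap]
  exact List.pmap_eq_self.2 fun _ _ => rfl

namespace IsFreeBasis

noncomputable def equiv (hA : IsFreeBasis A) : FreeGroup A ≃* G :=
  MulEquiv.ofBijective _ hA

lemma equiv_of (hA : IsFreeBasis A) (a : A) : hA.equiv (FreeGroup.of a) = a :=
  FreeGroup.lift_apply_of

lemma equiv_symm_of_mem (hA : IsFreeBasis A) {a : G} (ha : a ∈ A) :
    hA.equiv.symm a = FreeGroup.of ⟨a, ha⟩ :=
  hA.equiv.symm_apply_eq.2 (hA.equiv_of ⟨a, ha⟩).symm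

lemma equiv_mk (hA : IsFreeBasis A) (L : List (A × Bool)) :
    hA.equiv (FreeGroup.mk L) = evalWord (L.map (Prod.map Subtype.val id)) := by
  rw [evalWord, List.map_map]
  refine (FreeGroup.lift_mk (f := fun a : A => (a : G))).trans
    (congrArg _ (List.map_congr_left ?_))
  rintro ⟨a, _ | _⟩ - <;> rfl

open Classical in
noncomputable def redWord (hA : IsFreeBasis A) (w : G) : List (G × Bool) :=
  (hA.equiv.symm w).toWord.map (Prod.map Subtype.val id)

lemma redWord_one (hA : IsFreeBasis A) : hA.redWord 1 = [] := by
  simp [redWord]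

lemma redWord_of_mem (hA : IsFreeBasis A) {a : G} (ha : a ∈ A) :
    hA.redWord a = [(a, true)] := by
  simp [redWord, hA.equiv_symm_of_mem ha]

lemma redWord_inv (hA : IsFreeBasis A) (w : G) :
    hA.redWord w⁻¹ = FreeGroup.invRev (hA.redWord w) := by
  simp [redWord, FreeGroup.toWord_inv, FreeGroup.invRev, Function.comp_def]

lemma redWord_mul_sublist (hA : IsFreeBasis A) (x y : G) :
    hA.redWord (x * y) <+ hA.redWord x ++ hA.redWord y := by
  classical
  rw [redWord, redWord, redWord, ← List.map_append, map_mul]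
  exact (FreeGroup.toWord_mul_sublist _ _).map _

end IsFreeBasis

lemma IsRedWordOf.eq_redWord {L : List (G × Bool)} {w : G} (hA : IsFreeBasis A)
    (h : IsRedWordOf A L w) : L = hA.redWord w := by
  classical
  obtain ⟨hLA, hLred, rfl⟩ := h
  obtain ⟨L', rfl⟩ := exists_map_val_eq_of_lettersIn hLA
  have hL' : FreeGroup.IsReduced L' := isReduced_of_isRedWord_map hLred
  rw [IsFreeBasis.redWord, ← hA.equiv_mk, MulEquiv.symm_apply_apply, FreeGroup.toWord_mk,
    hL'.reduce_eq]

namespace IsFreeBasis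

variable (hA : IsFreeBasis A) (a : G)

lemma countLetter_redWord_mul_le (x y : G) :
    countLetter a (hA.redWord (x * y)) ≤
      countLetter a (hA.redWord x) + countLetter a (hA.redWord y) :=
  (hA.redWord_mul_sublist x y).countP_le.trans_eq List.countP_append

lemma countLetter_redWord_inv (x : G) :
    countLetter a (hA.redWord x⁻¹) = countLetter a (hA.redWord x) := by
  simp [countLetter, redWord_inv, FreeGroup.invRev, List.countP_map, Function.comp_def]

lemma countLetter_redWord_eq_zero_of_mem_closure {v : G}
    (hv : v ∈ Subgroup.closure (A \ {a})) : countLetter a (hA.redWord v) = 0 := by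
  induction hv using Subgroup.closure_induction with
  | mem b hb => simpa [countLetter, hA.redWord_of_mem hb.1] using hb.2
  | one => simp [countLetter, hA.redWord_one]
  | mul x y _ _ hx hy => simpa [hx, hy] using hA.countLetter_redWord_mul_le a x y
  | inv x _ hx => rwa [countLetter_redWord_inv]

lemma countLetter_redWord_map_le (f : G →* G)
    (hf : ∀ b ∈ A, countLetter a (hA.redWord (f b)) ≤ countLetter a [(b, true)]) (w : G) :
    countLetter a (hA.redWord (f w)) ≤ countLetter a (hA.redWord w) := by
  classical
  suffices key : ∀ L : List (A × Bool),
      countLetter a (hA.redWord (f (hA.equiv (FreeGroup.mk L)))) ≤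
        countLetter a (L.map (Prod.map Subtype.val id)) by
    simpa [FreeGroup.mk_toWord, redWord] using key (hA.equiv.symm w).toWord
  intro L
  induction L with
  | nil => simp [countLetter, ← FreeGroup.one_eq_mk, hA.redWord_one]
  | cons x L ih =>
    rw [← List.singleton_append, ← FreeGroup.mul_mk, map_mul, map_mul, List.map_append,
      countLetter_append]
    refine (hA.countLetter_redWord_mul_le a _ _).trans (add_le_add ?_ ih)
    obtain ⟨b, _ | _⟩ := x
    · have hmk : FreeGroup.mk [(b, false)] = (FreeGroup.of b)⁻¹ := by
        simp [FreeGroup.of, FreeGroup.inv_mk, FreeGroup.invRev]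
      rw [hmk, map_inv, map_inv, countLetter_redWord_inv, equiv_of]
      simpa [countLetter] using hf b b.2
    · rw [← FreeGroup.of, equiv_of]
      simpa [countLetter] using hf b b.2

lemma countLetter_redWord_map_le_of_mapsTo_closure (f : G →* G)
    (hf : ∀ x ∈ Subgroup.closure (A \ {a}), f x ∈ Subgroup.closure (A \ {a}))
    (hfa : ∃ u ∈ Subgroup.closure (A \ {a}), f a = a * u) (w : G) :
    countLetter a (hA.redWord (f w)) ≤ countLetter a (hA.redWord w) := by
  refine hA.countLetter_redWord_map_le a f (fun b hb => ?_) w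
  by_cases hba : b = a
  · subst hba
    obtain ⟨u, hu, hfu⟩ := hfa
    calc countLetter b (hA.redWord (f b))
        ≤ countLetter b (hA.redWord b) + countLetter b (hA.redWord u) :=
          hfu ▸ hA.countLetter_redWord_mul_le b b u
      _ = countLetter b [(b, true)] := by
          rw [hA.countLetter_redWord_eq_zero_of_mem_closure b hu, hA.redWord_of_mem hb, add_zero]
  · have hfb := hf b (Subgroup.subset_closure ⟨hb, hba⟩)
    rw [hA.countLetter_redWord_eq_zero_of_mem_closure a hfb]
    exact Nat.zero_le _

end IsFreeBasis

theorem stmt_18_general (N : ℕ)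
    (A : Set (FreeGroup (Fin N))) (hA : IsFreeBasis A)
    (a₀ : FreeGroup (Fin N))
    (Φ : MulAut (FreeGroup (Fin N)))
    (hinv : ∀ x ∈ Subgroup.closure (A \ {a₀}), Φ x ∈ Subgroup.closure (A \ {a₀}))
    (u : FreeGroup (Fin N)) (hu : u ∈ Subgroup.closure (A \ {a₀}))
    (hΦa : Φ a₀ = a₀ * u)
    (g : FreeGroup (Fin N)) (n : ℕ)
    (Lg LΦ : List (FreeGroup (Fin N) × Bool))
    (hLg : IsRedWordOf A Lg g) (hLΦ : IsRedWordOf A LΦ ((Φ ^ n) g)) :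
    countLetter a₀ LΦ ≤ countLetter a₀ Lg := by
  rw [hLg.eq_redWord hA, hLΦ.eq_redWord hA]
  exact hA.countLetter_redWord_map_le_of_mapsTo_closure a₀ (Φ ^ n).toMonoidHom
    (fun x hx => MulAut.pow_apply_mem hinv n hx) (MulAut.exists_pow_apply_eq_mul hinv hu hΦa n) g

/-- Let `A` be a free basis of `F_N` (`N ≥ 2`), `a₀ ∈ A`,
`A' = A \ {a₀}`, and let `Φ ∈ Aut(F_N)` map `⟨A'⟩` into itself with
`Φ(a₀) = a₀ u` for some `u ∈ ⟨A'⟩`. Then for every `g ∈ F_N` and `n ≥ 0`, the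
number of occurrences of `a₀^{±1}` in the reduced word of `Φ^n(g)` over `A` is
at most the number of occurrences of `a₀^{±1}` in the reduced word of `g`. -/
theorem stmt_18 (N : ℕ) (hN : 2 ≤ N)
    (A : Set (FreeGroup (Fin N))) (hA : IsFreeBasis A)
    (a₀ : FreeGroup (Fin N)) (ha₀ : a₀ ∈ A)
    (Φ : MulAut (FreeGroup (Fin N)))
    (hinv : ∀ x ∈ Subgroup.closure (A \ {a₀}), Φ x ∈ Subgroup.closure (A \ {a₀}))
    (u : FreeGroup (Fin N)) (hu : u ∈ Subgroup.closure (A \ {a₀}))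
    (hΦa : Φ a₀ = a₀ * u)
    (g : FreeGroup (Fin N)) (n : ℕ)
    (Lg LΦ : List (FreeGroup (Fin N) × Bool))
    (hLg : IsRedWordOf A Lg g) (hLΦ : IsRedWordOf A LΦ ((Φ ^ n) g)) :
    countLetter a₀ LΦ ≤ countLetter a₀ Lg :=
  stmt_18_general N A hA a₀ Φ hinv u hu hΦa g n Lg LΦ hLg hLΦ

end SRF
end
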